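/- arXiv:1508.03431 — 3 statements merged into one kernel-verified Lean document; each statement's English description precedes it below -/
import Mathlib

section
/- Let P be a k×k stochastic matrix all of whose entries are rational numbers with common denominator D, and suppose the Markov chain defined by P has a unique absorbing (recurrent) class. Then the stationary distribution p* (the unique probability vector with p*P = p*) has all entries rational with a common denominator at most √k · 2^(k/2) · D^k. -/
/-!
Pick a state `i` with `p i ≥ 1/k` and let `A` be `1 - P` with its `i`-th column replaced by
ones, so that `p A = eᵢ`. Uniqueness of the absorbing class makes `A` invertible: a left null
vector of `A` is a fixed vector of `P` with zero sum, and its positive and negative parts are then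
nonzero fixed vectors with disjoint closed supports, each containing an absorbing class.
Cramer's rule gives `det A • p = adjugate A i`. The entry `adjugate A i i` is a principal minor
`det (1 - P')` with `P'` substochastic, and it lies in `[0, 1]` because `1 - P'` is a weakly
diagonally dominant Z-matrix (eliminate the first column and induct). With `p i ≥ 1/k` this gives
`0 < det A ≤ k`. Finally `D • A` is an integer matrix, so `det (D • A) = D^k det A ≤ k D^k` is a
common denominator of `p`, and `k ≤ √k 2^(k/2)`.
-/

/-- An absorbing (recurrent) class of a Markov chain with transition matrix `P`:
a nonempty closed set of states that is minimal among nonempty closed sets. -/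
def AbsorbingClass {V : Type} [Fintype V] (P : Matrix V V ℝ) (C : Set V) : Prop :=
  C.Nonempty ∧ (∀ v ∈ C, ∀ u, P v u ≠ 0 → u ∈ C) ∧
    ∀ C' ⊆ C, C'.Nonempty → (∀ v ∈ C', ∀ u, P v u ≠ 0 → u ∈ C') → C' = C

open Matrix Finset

section ZMatrix

variable {K : Type*} [Field K] [LinearOrder K] [IsStrictOrderedRing K]

structure IsDiagDominantZMatrix {n : Type*} [Fintype n] (M : Matrix n n K) : Prop where
  off_diag_nonpos : ∀ i j, i ≠ j → M i j ≤ 0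
  sum_row_nonneg : ∀ i, 0 ≤ ∑ j, M i j

def schurPivot {n : ℕ} (M : Matrix (Fin (n + 1)) (Fin (n + 1)) K) : Matrix (Fin n) (Fin n) K :=
  fun i j => M i.succ j.succ - M i.succ 0 / M 0 0 * M 0 j.succ

theorem det_eq_mul_det_schurPivot {n : ℕ} (M : Matrix (Fin (n + 1)) (Fin (n + 1)) K)
    (h : M 0 0 ≠ 0) : M.det = M 0 0 * (schurPivot M).det := by
  set c : Fin (n + 1) → K := Fin.cases 0 fun i => -(M i.succ 0 / M 0 0)
  set M' : Matrix (Fin (n + 1)) (Fin (n + 1)) K := fun i j => M i j + c i * M 0 j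
  have hM' : M'.det = M.det :=
    det_eq_of_forall_row_eq_smul_add_const c 0 rfl fun _ _ => rfl
  have hcol : ∀ i : Fin n, M' i.succ 0 = 0 := fun i => by
    simp [M', c, field]
  have hsub : M'.submatrix Fin.succ Fin.succ = schurPivot M := by
    ext i j
    change M i.succ j.succ + c i.succ * M 0 j.succ = _
    simp [c, schurPivot]
    ring
  rw [← hM', det_succ_column_zero, Fin.sum_univ_succ, Finset.sum_eq_zero fun i _ => by
    simp [hcol]]
  simp [M', c, Fin.succAbove_zero, hsub]

namespace IsDiagDominantZMatrix

section

variable {n : Type*} [Fintype n] {M : Matrix n n K}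

theorem diag_nonneg (hM : IsDiagDominantZMatrix M) (i : n) : 0 ≤ M i i := by
  classical
  have hrow := hM.sum_row_nonneg i
  rw [← add_sum_erase _ _ (mem_univ i)] at hrow
  have : ∑ j ∈ univ.erase i, M i j ≤ 0 :=
    sum_nonpos fun j hj => hM.off_diag_nonpos i j (ne_of_mem_erase hj).symm
  linarith

theorem row_eq_zero_of_diag_eq_zero (hM : IsDiagDominantZMatrix M) {i : n} (hi : M i i = 0) :
    ∀ j, M i j = 0 := by
  classical
  have hoff : ∀ j ∈ univ.erase i, M i j ≤ 0 := fun j hj =>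
    hM.off_diag_nonpos i j (ne_of_mem_erase hj).symm
  have hsum := hM.sum_row_nonneg i
  rw [← add_sum_erase _ _ (mem_univ i), hi, zero_add] at hsum
  intro j
  rcases eq_or_ne j i with rfl | hj
  · exact hi
  · exact (sum_eq_zero_iff_of_nonpos hoff).1 (le_antisymm (sum_nonpos hoff) hsum) j
      (mem_erase.2 ⟨hj, mem_univ j⟩)

end

section

variable {n : ℕ} {M : Matrix (Fin (n + 1)) (Fin (n + 1)) K}

theorem schurPivot_isDiagDominantZMatrix (hM : IsDiagDominantZMatrix M) (h : 0 < M 0 0) :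
    IsDiagDominantZMatrix (schurPivot M) := by
  have hc : ∀ i : Fin n, 0 ≤ -(M i.succ 0 / M 0 0) := fun i => neg_nonneg.2
    (div_nonpos_of_nonpos_of_nonneg (hM.off_diag_nonpos _ _ (Fin.succ_ne_zero i)) h.le)
  constructor
  · intro i j hij
    have := mul_nonpos_of_nonneg_of_nonpos (hc i)
      (hM.off_diag_nonpos 0 j.succ (Fin.succ_ne_zero j).symm)
    have := hM.off_diag_nonpos i.succ j.succ (Fin.succ_injective _ |>.ne hij)
    simp only [schurPivot]
    linarith
  · intro i
    have hrow : ∀ r, ∑ j : Fin n, M r j.succ = ∑ j, M r j - M r 0 := fun r => by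
      rw [Fin.sum_univ_succ]; ring
    have : ∑ j, schurPivot M i j = ∑ j, M i.succ j + -(M i.succ 0 / M 0 0) * ∑ j, M 0 j := by
      simp only [schurPivot, sum_sub_distrib, ← mul_sum, hrow]
      field_simp
      ring
    rw [this]
    exact add_nonneg (hM.sum_row_nonneg _) (mul_nonneg (hc i) (hM.sum_row_nonneg 0))

theorem schurPivot_diag_le (hM : IsDiagDominantZMatrix M) (h : 0 < M 0 0) (i : Fin n) :
    schurPivot M i i ≤ M i.succ i.succ := by
  have : 0 ≤ M i.succ 0 / M 0 0 * M 0 i.succ := mul_nonneg_of_nonpos_of_nonpos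
    (div_nonpos_of_nonpos_of_nonneg (hM.off_diag_nonpos _ _ (Fin.succ_ne_zero i)) h.le)
    (hM.off_diag_nonpos 0 i.succ (Fin.succ_ne_zero i).symm)
  simp only [schurPivot]
  linarith

end

theorem det_mem_Icc : ∀ {n : ℕ} {M : Matrix (Fin n) (Fin n) K}, IsDiagDominantZMatrix M →
    0 ≤ M.det ∧ M.det ≤ ∏ i, M i i
  | 0, M, _ => by simp
  | n + 1, M, hM => by
    rcases (hM.diag_nonneg 0).eq_or_lt with h | h
    · rw [det_eq_zero_of_row_eq_zero 0 (hM.row_eq_zero_of_diag_eq_zero h.symm)]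
      exact ⟨le_rfl, prod_nonneg fun i _ => hM.diag_nonneg i⟩
    have hS := hM.schurPivot_isDiagDominantZMatrix h
    obtain ⟨ih₀, ih₁⟩ := hS.det_mem_Icc
    rw [det_eq_mul_det_schurPivot M h.ne', Fin.prod_univ_succ]
    refine ⟨mul_nonneg h.le ih₀, mul_le_mul_of_nonneg_left (ih₁.trans ?_) h.le⟩
    exact prod_le_prod (fun i _ => hS.diag_nonneg i) fun i _ => hM.schurPivot_diag_le h i

end IsDiagDominantZMatrix

theorem det_one_sub_mem_Icc {n : ℕ} {P : Matrix (Fin n) (Fin n) K} (hP : ∀ i j, 0 ≤ P i j)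
    (hrow : ∀ i, ∑ j, P i j ≤ 1) : 0 ≤ (1 - P).det ∧ (1 - P).det ≤ 1 := by
  have hM : IsDiagDominantZMatrix (1 - P) := by
    refine ⟨fun i j hij => by simp [one_apply_ne hij, hP i j], fun i => ?_⟩
    simpa [sum_sub_distrib, one_apply] using hrow i
  refine ⟨hM.det_mem_Icc.1, hM.det_mem_Icc.2.trans (prod_le_one (fun i _ => hM.diag_nonneg i)
    fun i _ => ?_)⟩
  simp [hP i i]

end ZMatrix

section Cramer

variable {n R : Type*} [Fintype n] [DecidableEq n]

theorem det_smul_eq_smul_adjugate_of_vecMul_eq_single [CommRing R] {A : Matrix n n R}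
    {p : n → R} {i : n} {c : R} (h : p ᵥ* A = Pi.single i c) :
    A.det • p = c • A.adjugate i := by
  have := congrArg (· ᵥ* A.adjugate) h
  simpa [vecMul_vecMul, mul_adjugate, vecMul_smul, single_vecMul, row] using this

theorem eq_intCast_div_det_of_vecMul_map_eq_single {B : Matrix n n ℤ} {p : n → ℝ} {i : n}
    {c : ℤ} (h : p ᵥ* B.map (↑) = Pi.single i (c : ℝ)) (hB : B.det ≠ 0) (j : n) :
    p j = ((c * B.adjugate i j : ℤ) : ℝ) / B.det := by
  have hadj : (B.map (↑)).adjugate i j = (B.adjugate i j : ℝ) :=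
    congrFun (congrFun (RingHom.map_adjugate (Int.castRingHom ℝ) B).symm i) j
  have := congrFun (det_smul_eq_smul_adjugate_of_vecMul_eq_single h) j
  rw [Pi.smul_apply, Pi.smul_apply, hadj, ← Int.cast_det] at this
  rw [eq_div_iff (by exact_mod_cast hB)]
  simpa [mul_comm] using this

theorem exists_common_denominator_of_vecMul_eq_single {A : Matrix n n ℝ} {B : Matrix n n ℤ}
    {D : ℕ} (hD : 0 < D) (hB : B.map (↑) = (D : ℝ) • A) (hA : 0 < A.det) {p : n → ℝ} {i : n}
    (hp : p ᵥ* A = Pi.single i 1) :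
    ∃ q : ℕ, (q : ℝ) = D ^ Fintype.card n * A.det ∧ ∀ j, ∃ z : ℤ, p j = z / q := by
  have hBdet : (B.det : ℝ) = D ^ Fintype.card n * A.det := by
    rw [Int.cast_det, hB, det_smul]
  have hBdet_pos : 0 < B.det := by
    rw [← Int.cast_pos (R := ℝ), hBdet]
    positivity
  have hpB : p ᵥ* B.map (↑) = Pi.single i ((D : ℤ) : ℝ) := by
    ext j
    simp [hB, vecMul_smul, hp, Pi.single_apply]
  have hq : ((B.det.toNat : ℕ) : ℝ) = B.det := by
    exact_mod_cast Int.toNat_of_nonneg hBdet_pos.le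
  refine ⟨B.det.toNat, hq.trans hBdet, fun j => ⟨(D : ℤ) * B.adjugate i j, ?_⟩⟩
  rw [eq_intCast_div_det_of_vecMul_map_eq_single hpB hBdet_pos.ne' j, hq]

end Cramer

section Markov

variable {V : Type} [Fintype V] {P : Matrix V V ℝ}

theorem exists_absorbingClass_subset {S : Set V} (hS : S.Nonempty)
    (hcl : ∀ v ∈ S, ∀ u, P v u ≠ 0 → u ∈ S) : ∃ C, AbsorbingClass P C ∧ C ⊆ S := by
  obtain ⟨C, hCS, ⟨hC, hCcl⟩, hmin⟩ := exists_minimal_le_of_wellFoundedLT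
    (fun C : Set V => C.Nonempty ∧ ∀ v ∈ C, ∀ u, P v u ≠ 0 → u ∈ C) S ⟨hS, hcl⟩
  exact ⟨C, ⟨hC, hCcl, fun C' hC' hne hcl' => hC'.antisymm (hmin ⟨hne, hcl'⟩ hC')⟩, hCS⟩

theorem sum_vecMul_of_mem_rowStochastic [DecidableEq V] (hP : P ∈ rowStochastic ℝ V)
    (x : V → ℝ) : ∑ j, (x ᵥ* P) j = ∑ i, x i := by
  simpa [dotProduct] using (dotProduct_mulVec x P 1).symm.trans (congrArg (x ⬝ᵥ ·) hP.2)

theorem abs_vecMul_eq_of_vecMul_eq [DecidableEq V] (hP : P ∈ rowStochastic ℝ V) {x : V → ℝ}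
    (hx : x ᵥ* P = x) : |x| ᵥ* P = |x| := by
  have hle : ∀ j ∈ univ, |x| j ≤ (|x| ᵥ* P) j := fun j _ => by
    calc |x| j = |(x ᵥ* P) j| := by rw [hx]; rfl
      _ = |∑ i, x i * P i j| := rfl
      _ ≤ ∑ i, |x i * P i j| := abs_sum_le_sum_abs _ _
      _ = (|x| ᵥ* P) j := by
        simp [vecMul, dotProduct, abs_mul, abs_of_nonneg (hP.1 _ _)]
  funext j
  exact ((sum_eq_sum_iff_of_le hle).1
    (sum_vecMul_of_mem_rowStochastic hP _).symm j (mem_univ j)).symm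

theorem posPart_vecMul_eq_of_vecMul_eq [DecidableEq V] (hP : P ∈ rowStochastic ℝ V)
    {x : V → ℝ} (hx : x ᵥ* P = x) : x⁺ ᵥ* P = x⁺ := by
  have h₁ : (x⁺ + x⁻) ᵥ* P = x⁺ + x⁻ := by
    rw [posPart_add_negPart]; exact abs_vecMul_eq_of_vecMul_eq hP hx
  have h₂ : (x⁺ - x⁻) ᵥ* P = x⁺ - x⁻ := by rw [posPart_sub_negPart]; exact hx
  rw [add_vecMul] at h₁
  rw [sub_vecMul] at h₂
  funext j
  have h₁j := congrFun h₁ j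
  have h₂j := congrFun h₂ j
  simp only [Pi.add_apply, Pi.sub_apply] at h₁j h₂j ⊢
  linarith

theorem pos_of_pos_of_vecMul_eq (hP : ∀ i j, 0 ≤ P i j) {x : V → ℝ} (hx0 : 0 ≤ x)
    (hx : x ᵥ* P = x) {v u : V} (hv : 0 < x v) (hvu : P v u ≠ 0) : 0 < x u :=
  calc 0 < x v * P v u := mul_pos hv ((hP v u).lt_of_ne' hvu)
    _ ≤ ∑ i, x i * P i u :=
        single_le_sum (f := fun i => x i * P i u) (fun i _ => mul_nonneg (hx0 i) (hP i u))
          (mem_univ v)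
    _ = x u := congrFun hx u

theorem exists_absorbingClass_subset_pos [DecidableEq V] (hP : P ∈ rowStochastic ℝ V)
    {x : V → ℝ} (hx : x ᵥ* P = x) (hpos : {i | 0 < x i}.Nonempty) :
    ∃ C, AbsorbingClass P C ∧ C ⊆ {i | 0 < x i} := by
  have hsupp : {i | 0 < x i} = {i | 0 < x⁺ i} := by ext; simp [Pi.posPart_apply]
  rw [hsupp] at hpos ⊢
  exact exists_absorbingClass_subset hpos fun v hv u hvu =>
    pos_of_pos_of_vecMul_eq hP.1 (posPart_nonneg x) (posPart_vecMul_eq_of_vecMul_eq hP hx) hv hvu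

theorem eq_zero_of_vecMul_eq_of_sum_eq_zero [DecidableEq V] (hP : P ∈ rowStochastic ℝ V)
    (huniq : ∃! C : Set V, AbsorbingClass P C) {x : V → ℝ} (hx : x ᵥ* P = x)
    (hsum : ∑ i, x i = 0) : x = 0 := by
  by_contra hx0
  obtain ⟨C, ⟨⟨w, hw⟩, -⟩, hC⟩ := huniq
  have hpos : ∀ y : V → ℝ, y ᵥ* P = y → ∑ i, y i = 0 → y ≠ 0 → 0 < y w := by
    intro y hy hsum hy0
    obtain ⟨i, -, hi⟩ := exists_pos_of_sum_zero_of_exists_nonzero y hsum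
      (by simpa [funext_iff] using hy0)
    obtain ⟨C', hC', hC'pos⟩ := exists_absorbingClass_subset_pos hP hy ⟨i, hi⟩
    exact hC'pos (hC C' hC' ▸ hw)
  have hxw := hpos x hx hsum hx0
  have hxw' := hpos (-x) (by rw [neg_vecMul, hx]) (by simp [hsum]) (neg_ne_zero.2 hx0)
  simp only [Pi.neg_apply, Left.neg_pos_iff] at hxw'
  linarith

end Markov

section StationarySystem

variable {n : Type*} [DecidableEq n]

def stationarySystem {R : Type*} [Ring R] (P : Matrix n n R) (i : n) : Matrix n n R :=
  (1 - P).updateCol i 1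

theorem vecMul_stationarySystem [Fintype n] {R : Type*} [Ring R] (P : Matrix n n R) (i : n)
    (x : n → R) : x ᵥ* stationarySystem P i = Function.update (x - x ᵥ* P) i (∑ j, x j) := by
  simp [stationarySystem, vecMul_updateCol, vecMul_sub, dotProduct]

theorem vecMul_stationarySystem_eq_single [Fintype n] {R : Type*} [Ring R] {P : Matrix n n R}
    {p : n → R} (hp_sum : ∑ j, p j = 1) (hp_stat : p ᵥ* P = p) (i : n) :
    p ᵥ* stationarySystem P i = Pi.single i 1 := by
  rw [vecMul_stationarySystem, hp_stat, sub_self, hp_sum]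
  rfl

theorem exists_intMatrix_map_eq_smul_stationarySystem {P : Matrix n n ℝ} {D : ℕ} (hD : D ≠ 0)
    (hrat : ∀ i j, ∃ z : ℤ, P i j = z / D) (i : n) :
    ∃ B : Matrix n n ℤ, B.map (↑) = (D : ℝ) • stationarySystem P i := by
  choose Z hZ using hrat
  refine ⟨of fun a b => if b = i then (D : ℤ) else (if a = b then (D : ℤ) else 0) - Z a b, ?_⟩
  ext a b
  by_cases hb : b = i
  · simp [stationarySystem, hb]
  · simp only [stationarySystem, map_apply, of_apply, Matrix.smul_apply, updateCol_ne hb,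
      Matrix.sub_apply, one_apply, hZ, if_neg hb, smul_eq_mul]
    split_ifs <;> push_cast <;> simp [field]

theorem det_stationarySystem_ne_zero {V : Type} [Fintype V] [DecidableEq V] {P : Matrix V V ℝ}
    (hP : P ∈ rowStochastic ℝ V) (huniq : ∃! C : Set V, AbsorbingClass P C) (i : V) :
    (stationarySystem P i).det ≠ 0 := by
  intro h
  obtain ⟨v, hv0, hv⟩ := exists_vecMul_eq_zero_iff.2 h
  rw [vecMul_stationarySystem] at hv
  have hsum : ∑ j, v j = 0 := by simpa using congrFun hv i
  have hoff : ∀ j, j ≠ i → (v - v ᵥ* P) j = 0 := fun j hj => by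
    simpa [hj] using congrFun hv j
  -- `v - v P` has zero sum, so its `i`-th entry vanishes along with the others
  have hfix : v - v ᵥ* P = 0 := by
    have htotal : ∑ j, (v - v ᵥ* P) j = 0 := by
      simp [sum_sub_distrib, sum_vecMul_of_mem_rowStochastic hP]
    rw [Fintype.sum_eq_single i hoff] at htotal
    funext j
    by_cases hj : j = i
    · subst hj; exact htotal
    · exact hoff j hj
  exact hv0 (eq_zero_of_vecMul_eq_of_sum_eq_zero hP huniq (sub_eq_zero.1 hfix).symm hsum)

theorem adjugate_stationarySystem_self_mem_Icc {K : Type*} [Field K] [LinearOrder K]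
    [IsStrictOrderedRing K] {m : ℕ} {P : Matrix (Fin (m + 1)) (Fin (m + 1)) K}
    (hP : P ∈ rowStochastic K (Fin (m + 1))) (i : Fin (m + 1)) :
    0 ≤ (stationarySystem P i).adjugate i i ∧ (stationarySystem P i).adjugate i i ≤ 1 := by
  have hsub : (stationarySystem P i).submatrix i.succAbove i.succAbove =
      1 - P.submatrix i.succAbove i.succAbove := by
    ext a b
    simp [stationarySystem, Fin.succAbove_ne, one_apply]
  rw [adjugate_fin_succ_eq_det_submatrix, hsub, (Even.add_self (i : ℕ)).neg_one_pow, one_mul]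
  refine det_one_sub_mem_Icc (fun a b => hP.1 _ _) fun a => ?_
  have hrow := Fin.sum_univ_succAbove (P (i.succAbove a)) i
  rw [sum_row_of_mem_rowStochastic hP] at hrow
  have := hP.1 (i.succAbove a) i
  simp only [submatrix_apply]
  linarith

theorem det_stationarySystem_mem_Ioc {m : ℕ} {P : Matrix (Fin (m + 1)) (Fin (m + 1)) ℝ}
    (hP : P ∈ rowStochastic ℝ (Fin (m + 1))) (huniq : ∃! C, AbsorbingClass P C)
    {p : Fin (m + 1) → ℝ} {i : Fin (m + 1)} (hp : p ᵥ* stationarySystem P i = Pi.single i 1)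
    (hi : 1 / ((m + 1 : ℕ) : ℝ) ≤ p i) :
    0 < (stationarySystem P i).det ∧ (stationarySystem P i).det ≤ (m + 1 : ℕ) := by
  have hcramer : (stationarySystem P i).det * p i = (stationarySystem P i).adjugate i i := by
    simpa using congrFun (det_smul_eq_smul_adjugate_of_vecMul_eq_single hp) i
  obtain ⟨hadj₀, hadj₁⟩ := adjugate_stationarySystem_self_mem_Icc hP i
  have hpi : 0 < p i := lt_of_lt_of_le (by positivity) hi
  have hdet_pos := (det_stationarySystem_ne_zero hP huniq i).lt_of_le'
    (nonneg_of_mul_nonneg_left (hcramer ▸ hadj₀) hpi)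
  rw [div_le_iff₀ (by positivity)] at hi
  exact ⟨hdet_pos, by nlinarith⟩

end StationarySystem

theorem natCast_le_sqrt_mul_two_rpow_half (k : ℕ) : (k : ℝ) ≤ √k * 2 ^ ((k : ℝ) / 2) := by
  have h2 : (2 : ℝ) ^ ((k : ℝ) / 2) = √(2 ^ k) := by
    rw [Real.sqrt_eq_rpow, ← Real.rpow_natCast, ← Real.rpow_mul (by norm_num)]
    ring_nf
  have hk : (k : ℝ) ≤ 2 ^ k := by exact_mod_cast Nat.lt_two_pow_self.le
  calc (k : ℝ) = √k * √k := (Real.mul_self_sqrt k.cast_nonneg).symm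
    _ ≤ √k * 2 ^ ((k : ℝ) / 2) := by rw [h2]; gcongr

theorem stationary_distribution_denominator_bound_general
    (k D : ℕ) (hD : 0 < D) (P : Matrix (Fin k) (Fin k) ℝ)
    (hnonneg : ∀ i j, 0 ≤ P i j)
    (hrowsum : ∀ i, ∑ j, P i j = 1)
    (hrat : ∀ i j, ∃ z : ℤ, P i j = (z : ℝ) / D)
    (huniq : ∃! C : Set (Fin k), AbsorbingClass P C)
    (p : Fin k → ℝ)
    (hp_sum : ∑ i, p i = 1)
    (hp_stat : Matrix.vecMul p P = p) :
    ∃ q : ℕ, 0 < q ∧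
      (q : ℝ) ≤ Real.sqrt k * 2 ^ ((k : ℝ) / 2) * (D : ℝ) ^ k ∧
      ∀ i, ∃ z : ℤ, p i = (z : ℝ) / q := by
  obtain ⟨m, rfl⟩ : ∃ m, k = m + 1 :=
    Nat.exists_eq_succ_of_ne_zero (by rintro rfl; simp at hp_sum)
  have hP : P ∈ rowStochastic ℝ (Fin (m + 1)) := mem_rowStochastic_iff_sum.2 ⟨hnonneg, hrowsum⟩
  obtain ⟨i, -, hi⟩ : ∃ i ∈ univ, 1 / ((m + 1 : ℕ) : ℝ) ≤ p i :=
    exists_le_of_sum_le univ_nonempty (by simp [hp_sum, field])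
  have hpA := vecMul_stationarySystem_eq_single hp_sum hp_stat i
  obtain ⟨hdet_pos, hdet_le⟩ := det_stationarySystem_mem_Ioc hP huniq hpA hi
  obtain ⟨B, hB⟩ := exists_intMatrix_map_eq_smul_stationarySystem hD.ne' hrat i
  obtain ⟨q, hq, hpq⟩ := exists_common_denominator_of_vecMul_eq_single hD hB hdet_pos hpA
  rw [Fintype.card_fin] at hq
  refine ⟨q, by exact_mod_cast hq ▸ (by positivity : (0 : ℝ) < D ^ (m + 1) * _), ?_, hpq⟩
  calc (q : ℝ) = D ^ (m + 1) * (stationarySystem P i).det := hq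
    _ ≤ (m + 1 : ℕ) * D ^ (m + 1) := by rw [mul_comm]; gcongr
    _ ≤ _ := by gcongr; exact natCast_le_sqrt_mul_two_rpow_half _

/-- Let `P` be a `k × k` stochastic matrix whose entries are
rationals with common denominator `D`, and suppose the Markov chain has a unique
absorbing class. Then the stationary distribution `p*` (a probability vector
with `p* P = p*`) has all entries rational with a common denominator at most
`√k · 2^(k/2) · D^k`. -/
theorem stationary_distribution_denominator_bound
    (k D : ℕ) (hD : 0 < D) (P : Matrix (Fin k) (Fin k) ℝ)
    (hnonneg : ∀ i j, 0 ≤ P i j)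
    (hrowsum : ∀ i, ∑ j, P i j = 1)
    (hrat : ∀ i j, ∃ z : ℤ, P i j = (z : ℝ) / D)
    (huniq : ∃! C : Set (Fin k), AbsorbingClass P C)
    (p : Fin k → ℝ)
    (hp_nonneg : ∀ i, 0 ≤ p i) (hp_sum : ∑ i, p i = 1)
    (hp_stat : Matrix.vecMul p P = p) :
    ∃ q : ℕ, 0 < q ∧
      (q : ℝ) ≤ Real.sqrt k * 2 ^ ((k : ℝ) / 2) * (D : ℝ) ^ k ∧
      ∀ i, ∃ z : ℤ, p i = (z : ℝ) / q :=
  stationary_distribution_denominator_bound_general k D hD P hnonneg hrowsum hrat huniq p hp_sum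
    hp_stat
end

section
/- In a BWR-game, suppose there exists a constant m such that for every position v the local value M̄[r](v) equals m, where M̄[r](v) is the maximum of r(v,u) over outgoing arcs if v is a White position, the minimum if v is a Black position, and the p(v,·)-weighted average if v is a random position. Then every locally optimal pure stationary strategy is optimal, and the game is ergodic with value m from every initial position. -/
open Matrix Filter

/-- A BWR-game: finite digraph with no sinks, positions partitioned into
White (`player v = 0`), Black (`player v = 1`) and Random (`player v = 2`),
positive transition probabilities on arcs out of random positions summing to 1,
and local rewards on arcs. -/
structure BWR (V : Type) [Fintype V] [DecidableEq V] where
  succ : V → Finset V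
  succ_nonempty : ∀ v, (succ v).Nonempty
  player : V → Fin 3
  p : V → V → ℝ
  p_mem : ∀ v u, player v = 2 → (u ∈ succ v ↔ 0 < p v u)
  p_zero : ∀ v u, player v = 2 → u ∉ succ v → p v u = 0
  p_sum : ∀ v, player v = 2 → ∑ u ∈ succ v, p v u = 1
  r : V → V → ℝ

namespace BWR

variable {V : Type} [Fintype V] [DecidableEq V] (G : BWR V)

/-- A (pure stationary) situation is valid if it moves along arcs. -/
def Valid (s : V → V) : Prop := ∀ v, s v ∈ G.succ v

/-- Combine a White strategy and a Black strategy into one situation. -/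
def combine (sW sB : V → V) : V → V := fun v => if G.player v = 0 then sW v else sB v

/-- Transition matrix of the Markov chain obtained by fixing situation `s`. -/
noncomputable def P (s : V → V) : Matrix V V ℝ :=
  Matrix.of fun v u => if G.player v = 2 then G.p v u else if s v = u then 1 else 0

/-- Expected one-step reward under situation `s`. -/
noncomputable def rbar (s : V → V) : V → ℝ :=
  fun v => if G.player v = 2 then ∑ u ∈ G.succ v, G.p v u * G.r v u else G.r v (s v)

/-- Limiting mean payoff from initial position `v` under situation `s`. -/
noncomputable def payoff (s : V → V) (v : V) : ℝ :=
  Filter.liminf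
    (fun T : ℕ => (∑ t ∈ Finset.range (T + 1), (G.P s ^ t).mulVec (G.rbar s)) v / (T + 1))
    Filter.atTop

/-- `μ` is the value function of the game: some saddle point in pure stationary
strategies realizes it uniformly. -/
def IsValue (μ : V → ℝ) : Prop :=
  ∃ sW sB : V → V, G.Valid (G.combine sW sB) ∧
    (∀ v, μ v = G.payoff (G.combine sW sB) v) ∧
    (∀ sW' : V → V, G.Valid (G.combine sW' sB) → ∀ v, G.payoff (G.combine sW' sB) v ≤ μ v) ∧
    (∀ sB' : V → V, G.Valid (G.combine sW sB') → ∀ v, μ v ≤ G.payoff (G.combine sW sB') v)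

/-- The local value `M̄[r](v)`. -/
noncomputable def mbar : V → ℝ := fun v =>
  if G.player v = 0 then (G.succ v).sup' (G.succ_nonempty v) (fun u => G.r v u)
  else if G.player v = 1 then (G.succ v).inf' (G.succ_nonempty v) (fun u => G.r v u)
  else ∑ u ∈ G.succ v, G.p v u * G.r v u

/-- A locally optimal situation achieves the local value at every controlled position. -/
def LocallyOptimal (s : V → V) : Prop :=
  G.Valid s ∧ ∀ v, G.player v ≠ 2 → G.r v (s v) = G.mbar v

end BWR

/-!
Under a locally optimal situation `s`, the one-step expected reward equals `M̄[r] ≡ m` at every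
position, so all Cesàro averages of the chain's rewards equal `m`. If White deviates, the rewards
at White positions can only drop to at most `m` (a maximum dominates every arc), while the
rewards at the other positions are unchanged; since a row-stochastic matrix maps vectors bounded
by `m` to vectors bounded by `m`, every Cesàro average, hence the mean payoff, is at most `m`.
Black's deviations are symmetric.
-/

open Finset Set

namespace Matrix

variable {n : Type*} [Fintype n] [DecidableEq n] {M : Matrix n n ℝ} {x : n → ℝ} {c a : ℝ}

lemma mulVec_mem_Icc_of_mem_rowStochastic (hM : M ∈ rowStochastic ℝ n)
    (hx : ∀ i, x i ∈ Icc c a) (j : n) : (M *ᵥ x) j ∈ Icc c a := by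
  have hconst (b : ℝ) : (M *ᵥ fun _ => b) j = b := by
    have : (fun _ : n => b) = b • (1 : n → ℝ) := by ext; simp
    rw [this, mulVec_smul, one_vecMul_of_mem_rowStochastic hM]; simp
  have hlow := nonneg_mulVec_of_mem_rowStochastic hM (x := x - fun _ => c)
    (fun i => sub_nonneg.2 (hx i).1) j
  have hupp := nonneg_mulVec_of_mem_rowStochastic hM (x := (fun _ => a) - x)
    (fun i => sub_nonneg.2 (hx i).2) j
  rw [mulVec_sub, Pi.sub_apply, hconst] at hlow hupp
  constructor <;> linarith

end Matrix

lemma cesaro_mem_Icc {u : ℕ → ℝ} {c a : ℝ} (hu : ∀ t, u t ∈ Icc c a) (T : ℕ) :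
    (∑ t ∈ range (T + 1), u t) / (T + 1) ∈ Icc c a := by
  have hT : (0 : ℝ) < T + 1 := by positivity
  have hlow := card_nsmul_le_sum (range (T + 1)) u c fun t _ => (hu t).1
  have hupp := sum_le_card_nsmul (range (T + 1)) u a fun t _ => (hu t).2
  simp only [card_range, nsmul_eq_mul, Nat.cast_add, Nat.cast_one] at hlow hupp
  exact ⟨(le_div_iff₀ hT).2 (by linarith), (div_le_iff₀ hT).2 (by linarith)⟩

lemma liminf_mem_Icc {u : ℕ → ℝ} {c a : ℝ} (hu : ∀ T, u T ∈ Icc c a) :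
    liminf u atTop ∈ Icc c a :=
  ⟨le_liminf_of_le (isCoboundedUnder_ge_of_le _ fun T => (hu T).2)
      (Eventually.of_forall fun T => (hu T).1),
    liminf_le_of_frequently_le (Frequently.of_forall fun T => (hu T).2)
      (isBoundedUnder_of ⟨c, fun T => (hu T).1⟩)⟩

namespace BWR

variable {V : Type} [Fintype V] [DecidableEq V] (G : BWR V)

lemma P_mem_rowStochastic (s : V → V) : G.P s ∈ rowStochastic ℝ V := by
  refine mem_rowStochastic_iff_sum.2 ⟨fun v u => ?_, fun v => ?_⟩
  · by_cases hv : G.player v = 2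
    · by_cases hu : u ∈ G.succ v
      · simpa [P, hv] using ((G.p_mem v u hv).1 hu).le
      · simp [P, hv, G.p_zero v u hv hu]
    · simp only [P, of_apply, hv, if_false]
      split_ifs <;> norm_num
  · by_cases hv : G.player v = 2
    · simp only [P, of_apply, hv, if_true]
      rw [← G.p_sum v hv]
      exact (sum_subset (subset_univ _) fun u _ hu => G.p_zero v u hv hu).symm
    · simp [P, hv]

variable {G}

lemma payoff_mem_Icc {s : V → V} {c a : ℝ} (h : ∀ v, G.rbar s v ∈ Icc c a) (v : V) :
    G.payoff s v ∈ Icc c a := by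
  refine liminf_mem_Icc fun T => ?_
  rw [Finset.sum_apply]
  exact cesaro_mem_Icc (fun t => mulVec_mem_Icc_of_mem_rowStochastic
    (pow_mem (G.P_mem_rowStochastic s) t) h v) T

lemma payoff_le_of_rbar_le {s : V → V} {a : ℝ} (h : ∀ v, G.rbar s v ≤ a) (v : V) :
    G.payoff s v ≤ a := by
  obtain ⟨c, hc⟩ := Finite.bddBelow_range (G.rbar s)
  exact (payoff_mem_Icc (fun u => ⟨hc ⟨u, rfl⟩, h u⟩) v).2

lemma le_payoff_of_le_rbar {s : V → V} {c : ℝ} (h : ∀ v, c ≤ G.rbar s v) (v : V) :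
    c ≤ G.payoff s v := by
  obtain ⟨a, ha⟩ := Finite.bddAbove_range (G.rbar s)
  exact (payoff_mem_Icc (fun u => ⟨h u, ha ⟨u, rfl⟩⟩) v).1

lemma payoff_eq_of_rbar_eq {s : V → V} {a : ℝ} (h : ∀ v, G.rbar s v = a) (v : V) :
    G.payoff s v = a :=
  le_antisymm (payoff_le_of_rbar_le (fun u => (h u).le) v)
    (le_payoff_of_le_rbar (fun u => (h u).ge) v)

lemma rbar_eq_mbar_of_random (s : V → V) {v : V} (hv : G.player v = 2) :
    G.rbar s v = G.mbar v := by
  simp [rbar, mbar, hv]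

lemma combine_apply_of_white {sW sB : V → V} {v : V} (hv : G.player v = 0) :
    G.combine sW sB v = sW v :=
  if_pos hv

lemma combine_apply_of_not_white {sW sB : V → V} {v : V} (hv : G.player v ≠ 0) :
    G.combine sW sB v = sB v :=
  if_neg hv

lemma rbar_congr {s t : V → V} {v : V} (h : s v = t v) : G.rbar s v = G.rbar t v := by
  simp [rbar, h]

lemma rbar_le_mbar_of_white {s : V → V} (hs : G.Valid s) {v : V} (hv : G.player v = 0) :
    G.rbar s v ≤ G.mbar v := by
  rw [rbar, mbar, if_neg (show G.player v ≠ 2 by omega), if_pos hv]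
  exact le_sup' _ (hs v)

lemma mbar_le_rbar_of_black {s : V → V} (hs : G.Valid s) {v : V} (hv : G.player v = 1) :
    G.mbar v ≤ G.rbar s v := by
  rw [rbar, mbar, if_neg (show G.player v ≠ 2 by omega), if_neg (show G.player v ≠ 0 by omega),
    if_pos hv]
  exact inf'_le _ (hs v)

namespace LocallyOptimal

variable {s : V → V}

lemma rbar_eq_mbar (hs : G.LocallyOptimal s) (v : V) : G.rbar s v = G.mbar v := by
  by_cases hv : G.player v = 2
  · exact rbar_eq_mbar_of_random s hv
  · simpa [rbar, hv] using hs.2 v hv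

lemma rbar_combine_left_le_mbar (hs : G.LocallyOptimal s) {sW : V → V}
    (hW : G.Valid (G.combine sW s)) (v : V) :
    G.rbar (G.combine sW s) v ≤ G.mbar v := by
  by_cases hv : G.player v = 0
  · exact rbar_le_mbar_of_white hW hv
  · rw [rbar_congr (combine_apply_of_not_white hv), hs.rbar_eq_mbar]

lemma mbar_le_rbar_combine_right (hs : G.LocallyOptimal s) {sB : V → V}
    (hB : G.Valid (G.combine s sB)) (v : V) :
    G.mbar v ≤ G.rbar (G.combine s sB) v := by
  by_cases hv : G.player v = 0
  · rw [rbar_congr (combine_apply_of_white hv), hs.rbar_eq_mbar]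
  by_cases hr : G.player v = 2
  · exact (rbar_eq_mbar_of_random _ hr).ge
  · exact mbar_le_rbar_of_black hB (by omega)

end LocallyOptimal

end BWR

/-- If in a BWR-game there is a constant `m` with `M̄[r](v) = m`
for all positions `v`, then every locally optimal pure stationary situation is a
saddle point, and the game is ergodic with value `m` from every initial position. -/
theorem bwr_constant_local_value_ergodic
    {V : Type} [Fintype V] [DecidableEq V] (G : BWR V) (m : ℝ)
    (hm : ∀ v, G.mbar v = m) :
    ∀ s : V → V, G.LocallyOptimal s →
      (∀ v, G.payoff s v = m) ∧
      (∀ sW' : V → V, G.Valid (G.combine sW' s) → ∀ v, G.payoff (G.combine sW' s) v ≤ m) ∧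
      (∀ sB' : V → V, G.Valid (G.combine s sB') → ∀ v, m ≤ G.payoff (G.combine s sB') v) := by
  intro s hs
  refine ⟨BWR.payoff_eq_of_rbar_eq fun v => (hs.rbar_eq_mbar v).trans (hm v), ?_, ?_⟩
  · intro sW' hW
    exact BWR.payoff_le_of_rbar_le fun v => (hs.rbar_combine_left_le_mbar hW v).trans_eq (hm v)
  · intro sB' hB
    exact BWR.le_payoff_of_le_rbar fun v =>
      (hm v).symm.trans_le (hs.mbar_le_rbar_combine_right hB v)
end

section
/- Let Ĝ(x) be a parametrized BW-game containing a distinguished position w with a self-loop of reward x (all other rewards fixed integers). For a fixed position v, define f(x) = μ_{Ĝ(x)}(v), the optimal mean-payoff value of v as a function of x. If f(x) < x for some x, then f(y) = f(x) for all y ≥ f(x). If f(x) > x, then f(y) = f(x) for all y ≤ f(x). If f(x) = x, then for y > x we have x ≤ f(y) ≤ y, and for y < x we have y ≤ f(y) ≤ x. -/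
open Matrix Filter

/-!
Fix saddle points of the games at parameters `a` and `b`, and let White's `a`-optimal strategy
play against Black's `b`-optimal one. In game `a` this is a deviation of Black, so its payoff from
`v` is at least `μ_a(v)`; in game `b` it is a deviation of White, so its payoff is at most
`μ_b(v)`. The play is the same in both games: either it is absorbed in the self-loop at `w`, with
payoffs `a` and `b`, or it never reaches `w` and the two payoffs coincide. Hence
`μ_a(v) ≤ μ_b(v)` or `μ_a(v) ≤ a ∧ b ≤ μ_b(v)` for all `a, b`, and the claimed shape of `f`
follows from this dichotomy by order reasoning alone.
-/

open scoped Topology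

namespace BWR

variable {V : Type} [Fintype V] [DecidableEq V]

lemma combine_congr {G G' : BWR V} (hplayer : G.player = G'.player) :
    G.combine = G'.combine := by
  unfold combine
  rw [hplayer]

lemma valid_congr {G G' : BWR V} (hsucc : G.succ = G'.succ) (s : V → V) :
    G.Valid s ↔ G'.Valid s := by
  rw [Valid, Valid, hsucc]

lemma Valid.combine_swap {G : BWR V} {sW sB sW' sB' : V → V}
    (h : G.Valid (G.combine sW sB)) (h' : G.Valid (G.combine sW' sB')) :
    G.Valid (G.combine sW sB') := by
  intro u
  by_cases hu : G.player u = 0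
  · simpa only [combine, if_pos hu] using h u
  · simpa only [combine, if_neg hu] using h' u

section Deterministic

variable (G : BWR V)

lemma mulVec_P_pow_apply (hdet : ∀ u, G.player u ≠ 2) (s : V → V) (g : V → ℝ) (t : ℕ)
    (v : V) : (G.P s ^ t).mulVec g v = g (s^[t] v) := by
  have hstep : ∀ (h : V → ℝ) (u : V), (G.P s).mulVec h u = h (s u) := by
    intro h u
    simp [Matrix.mulVec, dotProduct, P, if_neg (hdet u)]
  induction t generalizing v with
  | zero => simp
  | succ t ih => rw [pow_succ', ← Matrix.mulVec_mulVec, hstep, ih]; rfl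

lemma payoff_eq_liminf_iterate (hdet : ∀ u, G.player u ≠ 2) (s : V → V) (v : V) :
    G.payoff s v = liminf (fun T : ℕ =>
      (∑ t ∈ Finset.range (T + 1), G.r (s^[t] v) (s^[t + 1] v)) / (T + 1)) atTop := by
  unfold payoff
  congr 1
  funext T
  rw [Finset.sum_apply]
  congr 1
  refine Finset.sum_congr rfl fun t _ => ?_
  rw [G.mulVec_P_pow_apply hdet, rbar, if_neg (hdet _), Function.iterate_succ_apply']

lemma payoff_eq_of_iterate_eq_fixedPoint (hdet : ∀ u, G.player u ≠ 2) {s : V → V} {v w : V}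
    (hw : s w = w) {N : ℕ} (hN : s^[N] v = w) : G.payoff s v = G.r w w := by
  have hiter : ∀ t, N ≤ t → s^[t] v = w := fun t ht => by
    rw [← Nat.sub_add_cancel ht, Function.iterate_add_apply, hN, Function.iterate_fixed hw]
  have hreward : Tendsto (fun t => G.r (s^[t] v) (s^[t + 1] v)) atTop (𝓝 (G.r w w)) :=
    tendsto_const_nhds.congr' <| (eventually_ge_atTop N).mono fun t ht => by
      simp only [hiter t ht, hiter (t + 1) (by omega)]
  have hmean := hreward.cesaro.comp (tendsto_add_atTop_nat 1)
  rw [G.payoff_eq_liminf_iterate hdet]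
  refine (hmean.congr fun T => ?_).liminf_eq
  simp only [Function.comp_apply, Nat.cast_add, Nat.cast_one, div_eq_inv_mul]

lemma payoff_eq_of_forall_iterate_ne (hdet : ∀ u, G.player u ≠ 2) {G' : BWR V}
    (hdet' : ∀ u, G'.player u ≠ 2) {w : V} (hr : ∀ u u', u ≠ w → G.r u u' = G'.r u u')
    {s : V → V} {v : V} (hno : ∀ t, s^[t] v ≠ w) : G.payoff s v = G'.payoff s v := by
  simp only [G.payoff_eq_liminf_iterate hdet, G'.payoff_eq_liminf_iterate hdet',
    hr _ _ (hno _)]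

end Deterministic

lemma IsValue.le_or_le_loop_and_loop_le {G G' : BWR V} {w : V} (hsucc : G.succ = G'.succ)
    (hplayer : G.player = G'.player) (hdet : ∀ u, G.player u ≠ 2) (hw : G.succ w = {w})
    (hr : ∀ u u', ¬(u = w ∧ u' = w) → G.r u u' = G'.r u u') {μ μ' : V → ℝ}
    (hμ : G.IsValue μ) (hμ' : G'.IsValue μ') (v : V) :
    μ v ≤ μ' v ∨ (μ v ≤ G.r w w ∧ G'.r w w ≤ μ' v) := by
  obtain ⟨sW, sB, hvalid, -, -, hBlack⟩ := hμ
  obtain ⟨sW', sB', hvalid', -, hWhite', -⟩ := hμ'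
  have hdet' : ∀ u, G'.player u ≠ 2 := hplayer ▸ hdet
  rw [← combine_congr hplayer] at hvalid' hWhite'
  rw [← valid_congr hsucc] at hvalid'
  set s := G.combine sW sB'
  have hs : G.Valid s := hvalid.combine_swap hvalid'
  have hle : μ v ≤ G.payoff s v := hBlack sB' hs v
  have hle' : G'.payoff s v ≤ μ' v := hWhite' sW ((valid_congr hsucc _).mp hs) v
  by_cases hhit : ∃ N, s^[N] v = w
  · obtain ⟨N, hN⟩ := hhit
    have hsw : s w = w := Finset.mem_singleton.mp (hw ▸ hs w)
    right
    rw [G.payoff_eq_of_iterate_eq_fixedPoint hdet hsw hN] at hle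
    rw [G'.payoff_eq_of_iterate_eq_fixedPoint hdet' hsw hN] at hle'
    exact ⟨hle, hle'⟩
  · push Not at hhit
    left
    rw [G.payoff_eq_of_forall_iterate_ne hdet hdet' (fun u u' hu => hr u u' (hu ·.1)) hhit] at hle
    exact hle.trans hle'

end BWR

lemma shape_of_forall_le_or_le_self_and_le {f : ℝ → ℝ}
    (h : ∀ a b, f a ≤ f b ∨ (f a ≤ a ∧ b ≤ f b)) (x : ℝ) :
    (f x < x → ∀ y, f x ≤ y → f y = f x) ∧
    (f x > x → ∀ y, y ≤ f x → f y = f x) ∧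
    (f x = x → ∀ y, x < y → x ≤ f y ∧ f y ≤ y) ∧
    (f x = x → ∀ y, y < x → y ≤ f y ∧ f y ≤ x) := by
  refine ⟨fun hx y hy => ?_, fun hx y hy => ?_, fun hx y hy => ?_, fun hx y hy => ?_⟩ <;>
    rcases h x y with hxy | hxy <;> rcases h y x with hyx | hyx <;>
    first | constructor <;> linarith | linarith

/-- Monotonicity structure of the value of a position `v` of a
parametrized BW-game `Ĝ(x)` (a deterministic mean-payoff game with a
distinguished position `w` whose self-loop reward is the parameter `x`), as a
function `f(x) = μ_{Ĝ(x)}(v)` of the parameter. -/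
theorem parametrized_BW_value_monotonicity
    {V : Type} [Fintype V] [DecidableEq V]
    (G : ℝ → BWR V) (w : V)
    -- the underlying graph, partition and probabilities do not depend on x
    (hsucc : ∀ x y, (G x).succ = (G y).succ)
    (hplayer : ∀ x y, (G x).player = (G y).player)
    -- BW-game: no random positions
    (hdet : ∀ x v, (G x).player v ≠ 2)
    -- w carries a self-loop with reward x; all other rewards are fixed
    (hw : ∀ x, (G x).succ w = {w})
    (hwr : ∀ x, (G x).r w w = x)
    (hr : ∀ x y v u, ¬(v = w ∧ u = w) → (G x).r v u = (G y).r v u)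
    (μ : ℝ → V → ℝ) (hμ : ∀ x, (G x).IsValue (μ x))
    (v : V) (f : ℝ → ℝ) (hf : ∀ x, f x = μ x v) (x : ℝ) :
    (f x < x → ∀ y, f x ≤ y → f y = f x) ∧
    (f x > x → ∀ y, y ≤ f x → f y = f x) ∧
    (f x = x → ∀ y, x < y → x ≤ f y ∧ f y ≤ y) ∧
    (f x = x → ∀ y, y < x → y ≤ f y ∧ f y ≤ x) := by
  refine shape_of_forall_le_or_le_self_and_le (fun a b => ?_) x
  have h := (hμ a).le_or_le_loop_and_loop_le (hsucc a b) (hplayer a b) (hdet a) (hw a)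
    (hr a b) (hμ b) v
  rwa [hwr, hwr, ← hf, ← hf] at h
end
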